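/- Let γ > 1 and let w = (ρ, m, E) ∈ ℝ³ be an admissible 1D Euler state, i.e. ρ > 0 and p = (γ−1)(E − m²/(2ρ)) > 0 (with γ ∈ (1, 3]). Let u = m/ρ, let c = √(γp/ρ) be the speed of sound, let f(w) = (m, ρu² + p, (E + p)u) be the 1D Euler flux, and let α ≥ |u| + c. Then both intermediate states w + f(w)/α and w − f(w)/α are admissible: each has positive density and positive pressure. This is the pointwise lemma from which the first-order Lax–Friedrichs scheme is positivity-preserving under the CFL condition (Δt/Δx)·‖|u| + c‖_∞ ≤ 1. -/

import Mathlib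

/-!
In primitive variables `(ρ, u, p)` the state `w + f(w)/α` has density `ρ (α + u) / α` and
pressure `p (2ρ(α + u)² - (γ - 1) p) / (2αρ(α + u))`, an identity of rational functions.
Both are positive as soon as `α (α + u) > 0` and `ρ (α + u)² ≥ γ p`, i.e. `|α + u| ≥ c`.
Since `w - f(w)/α = w + f(w)/(-α)`, the choice `α ≥ |u| + c` gives both conditions for `±α`.
-/

/-- Pressure of a 1D Euler state `w = (ρ, m, E)`. -/
noncomputable def eulerPressure1D (γ : ℝ) (w : Fin 3 → ℝ) : ℝ :=
  (γ - 1) * (w 2 - (w 1) ^ 2 / (2 * w 0))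

/-- The 1D Euler flux `f(w) = (m, ρu² + p, (E + p)u)` with `u = m/ρ`. -/
noncomputable def eulerFlux1D (γ : ℝ) (w : Fin 3 → ℝ) : Fin 3 → ℝ :=
  ![w 1, w 0 * (w 1 / w 0) ^ 2 + eulerPressure1D γ w,
    (w 2 + eulerPressure1D γ w) * (w 1 / w 0)]

def IsAdmissible1D (γ : ℝ) (w : Fin 3 → ℝ) : Prop :=
  0 < w 0 ∧ 0 < eulerPressure1D γ w

lemma add_inv_smul_eulerFlux1D_zero (γ α : ℝ) (w : Fin 3 → ℝ) (hρ : w 0 ≠ 0) (hα : α ≠ 0) :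
    (w + α⁻¹ • eulerFlux1D γ w) 0 = w 0 * ((α + w 1 / w 0) / α) := by
  simp only [eulerFlux1D, Pi.add_apply, Pi.smul_apply, smul_eq_mul, Matrix.cons_val_zero]
  field_simp

lemma eulerPressure1D_add_inv_smul_eulerFlux1D {γ α : ℝ} {w : Fin 3 → ℝ} (hγ : γ ≠ 1)
    (hρ : w 0 ≠ 0) (hα : α ≠ 0) (hαu : α + w 1 / w 0 ≠ 0) :
    eulerPressure1D γ (w + α⁻¹ • eulerFlux1D γ w) =
      eulerPressure1D γ w *
          (2 * w 0 * (α + w 1 / w 0) ^ 2 - (γ - 1) * eulerPressure1D γ w) /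
        (2 * α * w 0 * (α + w 1 / w 0)) := by
  have hγ' : γ - 1 ≠ 0 := sub_ne_zero.2 hγ
  set u := w 1 / w 0
  set p := eulerPressure1D γ w with hp
  have hm : w 1 = w 0 * u := (mul_div_cancel₀ _ hρ).symm
  have hE : w 2 = p / (γ - 1) + w 0 * u ^ 2 / 2 := by
    rw [hp, eulerPressure1D, hm]
    field_simp
    ring
  simp only [eulerPressure1D, eulerFlux1D, Pi.add_apply, Pi.smul_apply, smul_eq_mul,
    Matrix.cons_val_zero, Matrix.cons_val_one, Matrix.cons_val_two, Matrix.head_cons,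
    Matrix.tail_cons]
  rw [hm, hE]
  field_simp
  ring

lemma IsAdmissible1D.add_inv_smul_eulerFlux1D {γ α : ℝ} {w : Fin 3 → ℝ} (hγ : 1 < γ)
    (hw : IsAdmissible1D γ w) (hαu : 0 < α * (α + w 1 / w 0))
    (hsound : γ * eulerPressure1D γ w ≤ w 0 * (α + w 1 / w 0) ^ 2) :
    IsAdmissible1D γ (w + α⁻¹ • eulerFlux1D γ w) := by
  obtain ⟨hρ, hp⟩ := hw
  have hα : α ≠ 0 := left_ne_zero_of_mul hαu.ne'
  have hαu' : α + w 1 / w 0 ≠ 0 := right_ne_zero_of_mul hαu.ne'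
  constructor
  · rw [add_inv_smul_eulerFlux1D_zero γ α w hρ.ne' hα, ← mul_div_mul_left _ _ hα]
    exact mul_pos hρ (div_pos hαu (mul_self_pos.2 hα))
  · rw [eulerPressure1D_add_inv_smul_eulerFlux1D hγ.ne' hρ.ne' hα hαu']
    refine div_pos (mul_pos hp ?_) ?_
    · linarith [mul_pos (by linarith : 0 < γ + 1) hp]
    · linarith [mul_pos hρ hαu]

lemma le_mul_sq_of_sqrt_div_le_abs {a ρ v : ℝ} (hρ : 0 < ρ) (h : √(a / ρ) ≤ |v|) :
    a ≤ ρ * v ^ 2 := by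
  rw [Real.sqrt_le_left (abs_nonneg v), sq_abs, div_le_iff₀ hρ] at h
  linarith

theorem laxFriedrichs_intermediate_states_admissible_general
    (γ : ℝ) (hγ : 1 < γ)
    (w : Fin 3 → ℝ) (hρ : 0 < w 0) (hp : 0 < eulerPressure1D γ w)
    (u : ℝ) (hu : u = w 1 / w 0)
    (c : ℝ) (hc : c = Real.sqrt (γ * eulerPressure1D γ w / w 0))
    (α : ℝ) (hα : |u| + c ≤ α) :
    (0 < (w + α⁻¹ • eulerFlux1D γ w) 0 ∧
        0 < eulerPressure1D γ (w + α⁻¹ • eulerFlux1D γ w)) ∧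
      (0 < (w - α⁻¹ • eulerFlux1D γ w) 0 ∧
        0 < eulerPressure1D γ (w - α⁻¹ • eulerFlux1D γ w)) := by
  subst hu
  have hw : IsAdmissible1D γ w := ⟨hρ, hp⟩
  have hc_pos : 0 < c := hc ▸ Real.sqrt_pos.2 (by have := hw.2; positivity)
  have hα_add : c ≤ α + w 1 / w 0 := by linarith [neg_abs_le (w 1 / w 0)]
  have hα_sub : c ≤ α - w 1 / w 0 := by linarith [le_abs_self (w 1 / w 0)]
  have hflip : w - α⁻¹ • eulerFlux1D γ w = w + (-α)⁻¹ • eulerFlux1D γ w := by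
    rw [inv_neg, neg_smul, sub_eq_add_neg]
  have hα_pos : 0 < α := by linarith
  refine ⟨hw.add_inv_smul_eulerFlux1D hγ ?_ ?_, hflip ▸ hw.add_inv_smul_eulerFlux1D hγ ?_ ?_⟩
  · exact mul_pos hα_pos (hc_pos.trans_le hα_add)
  · exact le_mul_sq_of_sqrt_div_le_abs hρ (hc ▸ hα_add.trans (le_abs_self _))
  · linarith [mul_pos hα_pos (hc_pos.trans_le hα_sub)]
  · exact le_mul_sq_of_sqrt_div_le_abs hρ (hc ▸ hα_sub.trans (le_abs.2 (Or.inr (by linarith))))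

/-- Pointwise lemma behind positivity preservation of the first-order
Lax–Friedrichs scheme under the CFL condition: for `γ ∈ (1,3]`, an admissible
state `w`, and `α ≥ |u| + c`, both intermediate states `w ± f(w)/α` have
positive density and positive pressure. -/
theorem laxFriedrichs_intermediate_states_admissible
    (γ : ℝ) (hγ : 1 < γ) (hγ3 : γ ≤ 3)
    (w : Fin 3 → ℝ) (hρ : 0 < w 0) (hp : 0 < eulerPressure1D γ w)
    (u : ℝ) (hu : u = w 1 / w 0)
    (c : ℝ) (hc : c = Real.sqrt (γ * eulerPressure1D γ w / w 0))
    (α : ℝ) (hα : |u| + c ≤ α) :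
    (0 < (w + α⁻¹ • eulerFlux1D γ w) 0 ∧
        0 < eulerPressure1D γ (w + α⁻¹ • eulerFlux1D γ w)) ∧
      (0 < (w - α⁻¹ • eulerFlux1D γ w) 0 ∧
        0 < eulerPressure1D γ (w - α⁻¹ • eulerFlux1D γ w)) :=
  laxFriedrichs_intermediate_states_admissible_general γ hγ w hρ hp u hu c hc α hα
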